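/- Every transitive permutation group of degree p², where p is a prime, is pre-primitive. -/

import Mathlib

open Equiv

variable {Ω : Type*}

/-- `G` is a transitive permutation group on `Ω`. -/
def IsTransitive (G : Subgroup (Perm Ω)) : Prop :=
  ∀ x y : Ω, ∃ g ∈ G, g x = y

/-- The partition (setoid) `r` of `Ω` is `G`-invariant. -/
def IsInvariantPartition (G : Subgroup (Perm Ω)) (r : Setoid Ω) : Prop :=
  ∀ g ∈ G, ∀ x y : Ω, r.r x y → r.r (g x) (g y)

/-- The partition `r` of `Ω` is the orbit partition of the permutation group `H`. -/
def IsOrbitPartition (H : Subgroup (Perm Ω)) (r : Setoid Ω) : Prop :=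
  ∀ x y : Ω, r.r x y ↔ ∃ h ∈ H, h x = y

/-- `G` is pre-primitive: every `G`-invariant partition is the orbit partition
of a subgroup of `G`. -/
def IsPrePrimitive (G : Subgroup (Perm Ω)) : Prop :=
  ∀ r : Setoid Ω, IsInvariantPartition G r → ∃ H ≤ G, IsOrbitPartition H r

/-- `N` is a normal subgroup of the permutation group `G`. -/
def IsNormalIn (N G : Subgroup (Perm Ω)) : Prop :=
  N ≤ G ∧ ∀ g ∈ G, ∀ n ∈ N, g * n * g⁻¹ ∈ N


/-!
The classes of a `G`-invariant partition `r` are permuted transitively by `G`, so they all have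
a common size `c ∣ p²`. For `c = 1` and `c = p²`, the orbit partitions of `⊥` and of `G` do the job.
For `c = p`, let `K` be the kernel of the action of `G` on the `p` classes. Since `K` is normal in
`G`, its orbits form a `G`-invariant partition refining `r`, with common size `d ∣ p²` and `d ≤ p`.
If `d = 1`, then `K = 1` and `G` embeds in `Sym(p)`, which is impossible because `p² ∣ |G|` by
transitivity while `p² ∤ p!`. Hence `d = p`, and the orbits of `K` are exactly the classes of `r`.
-/

open MulAction

lemma Nat.Prime.not_sq_dvd_factorial {p : ℕ} (hp : p.Prime) : ¬ p ^ 2 ∣ p.factorial := by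
  rw [← Nat.mul_factorial_pred hp.ne_zero, sq, Nat.mul_dvd_mul_iff_left hp.pos, hp.dvd_factorial]
  have := hp.pos
  omega

section
variable {r s : Setoid Ω}

lemma Setoid.eq_of_ncard_class_eq_one {x y : Ω} (hx : {z | r.r x z}.ncard = 1) (hxy : r.r x y) :
    x = y := by
  obtain ⟨a, ha⟩ := Set.ncard_eq_one.mp hx
  have hxa : x ∈ ({a} : Set Ω) := ha ▸ r.refl x
  have hya : y ∈ ({a} : Set Ω) := ha ▸ hxy
  exact hxa.trans hya.symm

lemma Setoid.eq_of_le_of_ncard_class_le [Finite Ω] (hsr : s ≤ r)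
    (hcard : ∀ x, {z | r.r x z}.ncard ≤ {z | s.r x z}.ncard) : s = r :=
  le_antisymm hsr fun x y hxy => by
    have hclass : {z | s.r x z} = {z | r.r x z} :=
      Set.eq_of_subset_of_ncard_le (fun z hz => hsr hz) (hcard x) (Set.toFinite _)
    exact (Set.ext_iff.mp hclass y).mpr hxy

end

section
variable {G : Subgroup (Perm Ω)} {r : Setoid Ω}

lemma IsInvariantPartition.image_class (hr : IsInvariantPartition G r) {g : Perm Ω} (hg : g ∈ G)
    (x : Ω) : g '' {z | r.r x z} = {z | r.r (g x) z} := by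
  ext z
  refine ⟨fun ⟨w, hw, hwz⟩ => hwz ▸ hr g hg x w hw, fun hz => ⟨g⁻¹ z, ?_, by simp⟩⟩
  simpa using hr g⁻¹ (inv_mem hg) (g x) z hz

lemma IsInvariantPartition.ncard_class_eq (hr : IsInvariantPartition G r) (hG : IsTransitive G)
    (x y : Ω) : {z | r.r x z}.ncard = {z | r.r y z}.ncard := by
  obtain ⟨g, hg, rfl⟩ := hG x y
  rw [← hr.image_class hg x, Set.ncard_image_of_injective _ g.injective]

lemma IsInvariantPartition.card_eq_card_quotient_mul [Finite Ω] (hr : IsInvariantPartition G r)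
    (hG : IsTransitive G) (x : Ω) :
    Nat.card Ω = Nat.card (Quotient r) * {z | r.r x z}.ncard := by
  have := Fintype.ofFinite (Quotient r)
  have hfiber (q : Quotient r) : Nat.card {y // Quotient.mk r y = q} = {z | r.r x z}.ncard := by
    induction q using Quotient.ind with
    | _ y =>
      rw [hr.ncard_class_eq hG x y, ← Nat.card_coe_set_eq]
      exact Nat.card_congr (Equiv.subtypeEquivRight fun z => Quotient.eq.trans ⟨r.symm, r.symm⟩)
  rw [← Nat.card_congr (Equiv.sigmaFiberEquiv (Quotient.mk r)), Nat.card_sigma]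
  simp [hfiber, Nat.card_eq_fintype_card]

lemma IsInvariantPartition.ncard_class_dvd_card [Finite Ω] (hr : IsInvariantPartition G r)
    (hG : IsTransitive G) (x : Ω) : {z | r.r x z}.ncard ∣ Nat.card Ω :=
  Dvd.intro_left _ (hr.card_eq_card_quotient_mul hG x).symm

lemma IsTransitive.card_dvd [Finite Ω] [Nonempty Ω] (hG : IsTransitive G) :
    Nat.card Ω ∣ Nat.card G := by
  have : IsPretransitive G Ω := ⟨fun x y => by
    obtain ⟨g, hg, hxy⟩ := hG x y
    exact ⟨⟨g, hg⟩, hxy⟩⟩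
  obtain ⟨x⟩ := ‹Nonempty Ω›
  rw [← index_stabilizer_of_transitive G x]
  exact (stabilizer G x).index_dvd_card

lemma isOrbitPartition_orbitRel (H : Subgroup (Perm Ω)) : IsOrbitPartition H (orbitRel H Ω) := by
  intro x y
  rw [Setoid.comm', orbitRel_apply, mem_orbit_iff]
  exact ⟨fun ⟨h, hxy⟩ => ⟨h, h.2, hxy⟩, fun ⟨h, hH, hxy⟩ => ⟨⟨h, hH⟩, hxy⟩⟩

lemma IsNormalIn.isInvariantPartition_orbitRel {N : Subgroup (Perm Ω)} (hN : IsNormalIn N G) :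
    IsInvariantPartition G (orbitRel N Ω) := by
  intro g hg x y hxy
  obtain ⟨n, hn, rfl⟩ := (isOrbitPartition_orbitRel N x y).mp hxy
  exact (isOrbitPartition_orbitRel N _ _).mpr ⟨g * n * g⁻¹, hN.2 g hg n hn, by simp⟩

lemma isOrbitPartition_bot (hr : ∀ x, {z | r.r x z}.ncard = 1) : IsOrbitPartition ⊥ r := by
  intro x y
  simp only [Subgroup.mem_bot, exists_eq_left, Perm.one_apply]
  exact ⟨Setoid.eq_of_ncard_class_eq_one (hr x), fun h => h ▸ r.refl x⟩

lemma eq_bot_of_ncard_orbitRel_class_eq_one {H : Subgroup (Perm Ω)}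
    (hH : ∀ x, {z | orbitRel H Ω x z}.ncard = 1) : H = ⊥ :=
  (Subgroup.eq_bot_iff_forall H).mpr fun h hh => Equiv.ext fun x =>
    (Setoid.eq_of_ncard_class_eq_one (hH x)
      ((isOrbitPartition_orbitRel H x (h x)).mpr ⟨h, hh, rfl⟩)).symm

lemma IsTransitive.isOrbitPartition [Finite Ω] (hG : IsTransitive G)
    (hr : ∀ x, {z | r.r x z}.ncard = Nat.card Ω) : IsOrbitPartition G r := by
  intro x y
  have hclass : {z | r.r x z} = Set.univ := (Set.eq_univ_iff_ncard _).mpr (hr x)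
  refine ⟨fun _ => hG x y, fun _ => ?_⟩
  exact (Set.ext_iff.mp hclass y).mpr trivial

end

section
variable (G : Subgroup (Perm Ω)) (r : Setoid Ω)

def blockKernel : Subgroup (Perm Ω) where
  carrier := {g | g ∈ G ∧ ∀ x, r.r (g x) x}
  mul_mem' := fun ⟨ha, ha'⟩ ⟨hb, hb'⟩ => ⟨mul_mem ha hb, fun x => r.trans (ha' _) (hb' x)⟩
  one_mem' := ⟨one_mem G, r.refl⟩
  inv_mem' := fun {a} ⟨ha, ha'⟩ =>
    ⟨inv_mem ha, fun x => r.symm (by simpa using ha' (a⁻¹ x))⟩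

variable {G r}

lemma mem_blockKernel {g : Perm Ω} : g ∈ blockKernel G r ↔ g ∈ G ∧ ∀ x, r.r (g x) x := Iff.rfl

lemma IsInvariantPartition.isNormalIn_blockKernel (hr : IsInvariantPartition G r) :
    IsNormalIn (blockKernel G r) G := by
  refine ⟨fun k hk => hk.1, fun g hg k ⟨hkG, hk⟩ => ⟨mul_mem (mul_mem hg hkG) (inv_mem hg), ?_⟩⟩
  intro x
  simpa using hr g hg _ _ (hk (g⁻¹ x))

lemma orbitRel_blockKernel_le : orbitRel (blockKernel G r) Ω ≤ r := by
  intro x y hxy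
  obtain ⟨k, hk, rfl⟩ := (isOrbitPartition_orbitRel _ x y).mp hxy
  exact r.symm (hk.2 x)

def IsInvariantPartition.permQuotient (hr : IsInvariantPartition G r) : G →* Perm (Quotient r) where
  toFun g := Quotient.congr g fun a b =>
    ⟨hr g g.2 a b, fun h => by simpa using hr g⁻¹ (inv_mem g.2) _ _ h⟩
  map_one' := by ext q; induction q using Quotient.ind; rfl
  map_mul' g h := by ext q; induction q using Quotient.ind; rfl

lemma IsInvariantPartition.permQuotient_eq_one_iff (hr : IsInvariantPartition G r) (g : G) :
    hr.permQuotient g = 1 ↔ (g : Perm Ω) ∈ blockKernel G r := by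
  simp only [mem_blockKernel, g.2, true_and, Equiv.ext_iff, Quotient.forall]
  exact forall_congr' fun x => Quotient.eq

lemma IsInvariantPartition.card_dvd_factorial [Finite Ω] (hr : IsInvariantPartition G r)
    (hK : blockKernel G r = ⊥) : Nat.card G ∣ (Nat.card (Quotient r)).factorial := by
  rw [← Nat.card_perm]
  refine Subgroup.card_dvd_of_injective hr.permQuotient <|
    (injective_iff_map_eq_one _).mpr fun g hg => ?_
  have := (hr.permQuotient_eq_one_iff g).mp hg
  rw [hK, Subgroup.mem_bot] at this
  exact Subtype.ext this

end

lemma IsInvariantPartition.blockKernel_ne_bot [Finite Ω] {G : Subgroup (Perm Ω)} {r : Setoid Ω}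
    {p : ℕ} (hp : p.Prime) (hcard : Nat.card Ω = p ^ 2) (hG : IsTransitive G)
    (hr : IsInvariantPartition G r) {x₀ : Ω} (hc : {z | r.r x₀ z}.ncard = p) :
    blockKernel G r ≠ ⊥ := by
  intro hK
  have : Nonempty Ω := ⟨x₀⟩
  have hQ : Nat.card (Quotient r) = p := by
    have := hr.card_eq_card_quotient_mul hG x₀
    rw [hcard, hc, sq] at this
    exact (Nat.eq_of_mul_eq_mul_right hp.pos this).symm
  exact hp.not_sq_dvd_factorial (hcard ▸ hQ ▸ hG.card_dvd.trans (hr.card_dvd_factorial hK))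

lemma IsInvariantPartition.isOrbitPartition_blockKernel [Finite Ω] {G : Subgroup (Perm Ω)}
    {r : Setoid Ω} {p : ℕ} (hp : p.Prime) (hcard : Nat.card Ω = p ^ 2) (hG : IsTransitive G)
    (hr : IsInvariantPartition G r) (hc : ∀ x, {z | r.r x z}.ncard = p) :
    IsOrbitPartition (blockKernel G r) r := by
  have : Nonempty Ω := (Nat.card_pos_iff.mp (hcard ▸ pow_pos hp.pos 2)).1
  have x₀ : Ω := Classical.arbitrary Ω
  set s := orbitRel (blockKernel G r) Ω
  have hs : IsInvariantPartition G s := hr.isNormalIn_blockKernel.isInvariantPartition_orbitRel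
  have hsr : s ≤ r := orbitRel_blockKernel_le
  have hd_le : {z | s.r x₀ z}.ncard ≤ p ^ 1 := by
    rw [pow_one, ← hc x₀]
    exact Set.ncard_le_ncard fun z hz => hsr hz
  have hd_dvd : {z | s.r x₀ z}.ncard ∣ p ^ 2 := hcard ▸ hs.ncard_class_dvd_card hG x₀
  obtain ⟨i, hi, hd⟩ := (Nat.dvd_prime_pow hp).mp hd_dvd
  rw [hd, Nat.pow_le_pow_iff_right hp.one_lt] at hd_le
  interval_cases i
  · exact absurd (eq_bot_of_ncard_orbitRel_class_eq_one fun x =>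
      (hs.ncard_class_eq hG x x₀).trans hd) (hr.blockKernel_ne_bot hp hcard hG (hc x₀))
  · have hsr_eq : s = r := Setoid.eq_of_le_of_ncard_class_le hsr fun x => by
      rw [hc, hs.ncard_class_eq hG x x₀, hd, pow_one]
    have hK_orbits : IsOrbitPartition (blockKernel G r) s := isOrbitPartition_orbitRel _
    rwa [hsr_eq] at hK_orbits

theorem transitive_degree_prime_squared_preprimitive
    {Ω : Type*} [Fintype Ω] (p : ℕ) (hp : p.Prime)
    (hcard : Fintype.card Ω = p ^ 2)
    (G : Subgroup (Perm Ω)) (hG : IsTransitive G) :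
    IsPrePrimitive G := by
  intro r hr
  rw [← Nat.card_eq_fintype_card] at hcard
  obtain ⟨x₀⟩ : Nonempty Ω := Nat.card_pos_iff.mp (hcard ▸ pow_pos hp.pos 2) |>.1
  have hc (x : Ω) : {z | r.r x z}.ncard = {z | r.r x₀ z}.ncard := hr.ncard_class_eq hG x x₀
  have hc_dvd : {z | r.r x₀ z}.ncard ∣ p ^ 2 := hcard ▸ hr.ncard_class_dvd_card hG x₀
  obtain ⟨i, hi, hi_eq⟩ := (Nat.dvd_prime_pow hp).mp hc_dvd
  simp only [hi_eq] at hc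
  interval_cases i
  · exact ⟨⊥, bot_le, isOrbitPartition_bot hc⟩
  · exact ⟨blockKernel G r, hr.isNormalIn_blockKernel.1,
      hr.isOrbitPartition_blockKernel hp hcard hG (by simpa using hc)⟩
  · exact ⟨G, le_rfl, hG.isOrbitPartition (hcard ▸ hc)⟩
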